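/- The algebraic equation 0 = Φ(1/ε) − Φ(h_∞/ε) − (1/ε)Φ'(h_∞/ε)(1 − h_∞), with Φ(v) = −1/(2v²) + 1/(8v⁸), admits a solution with asymptotic expansion h_∞ = ε + ε²/16 + (45/512)ε³ + O(ε⁴) as ε → 0⁺; in particular, substituting h_∞ = ε(1 + a ε + b ε²) and expanding in powers of ε forces a = 1/16 and b = 45/512. -/

import Mathlib

/-!
Write `h∞ = ε u` with `u = 1 + a ε + b ε²`. Clearing denominators, `F = N(ε) / (8 ε u⁹)` with `N` a
polynomial vanishing at `ε = 0`, so `F = (c₀ + ε m(ε)) / (8 u⁹)` with `c₀ = 3 - 48 a` and `m`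
polynomial with `m(0) = 75 a - 120 a² - 48 b`. Then `F → 0` forces `c₀ = 0`, after which
`F / ε = m / (8 u⁹) → 0` forces `m(0) = 0`; these two linear-then-quadratic conditions have the
unique solution `a = 1/16`, `b = 45/512`.
-/

open Filter

/-- F(h∞, ε) = Φ(1/ε) − Φ(h∞/ε) − (1/ε)Φ'(h∞/ε)(1−h∞) for
Φ(v) = −1/(2v²) + 1/(8v⁸), Φ'(v) = 1/v³ − 1/v⁹. -/
noncomputable def Fexp (hinf ε : ℝ) : ℝ :=
  (-1 / (2 * (1 / ε) ^ 2) + 1 / (8 * (1 / ε) ^ 8)) -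
  (-1 / (2 * (hinf / ε) ^ 2) + 1 / (8 * (hinf / ε) ^ 8)) -
  (1 / ε) * (1 / (hinf / ε) ^ 3 - 1 / (hinf / ε) ^ 9) * (1 - hinf)

open Topology

theorem tendsto_zero_and_div_tendsto_zero_iff {l : Filter ℝ} [l.NeBot] (hl : l ≤ 𝓝[≠] 0)
    {c : ℝ} {m d : ℝ → ℝ} (hm : ContinuousAt m 0) (hd : ContinuousAt d 0) (hd0 : d 0 ≠ 0) :
    (Tendsto (fun ε => (c + ε * m ε) / d ε) l (𝓝 0) ∧
        Tendsto (fun ε => (c + ε * m ε) / d ε / ε) l (𝓝 0)) ↔ c = 0 ∧ m 0 = 0 := by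
  have hl0 : l ≤ 𝓝 0 := hl.trans nhdsWithin_le_nhds
  have hlim : Tendsto (fun ε => (c + ε * m ε) / d ε) l (𝓝 (c / d 0)) := by
    have : ContinuousAt (fun ε => (c + ε * m ε) / d ε) 0 := by fun_prop (disch := exact hd0)
    simpa using this.tendsto.mono_left hl0
  have hslope (hc : c = 0) : (fun ε => (c + ε * m ε) / d ε / ε) =ᶠ[l] fun ε => m ε / d ε := by
    filter_upwards [hl self_mem_nhdsWithin] with ε hε
    rw [hc, zero_add, div_div, mul_comm (d ε), ← div_div, mul_div_cancel_left₀ _ hε]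
  have hslim : Tendsto (fun ε => m ε / d ε) l (𝓝 (m 0 / d 0)) :=
    (hm.div hd hd0).tendsto.mono_left hl0
  constructor
  · rintro ⟨h₀, h₁⟩
    have hc : c = 0 := by simpa [hd0] using tendsto_nhds_unique hlim h₀
    exact ⟨hc, by simpa [hd0] using tendsto_nhds_unique (hslim.congr' (hslope hc).symm) h₁⟩
  · rintro ⟨hc, hm0⟩
    exact ⟨by simpa [hc] using hlim, by simpa [hm0] using hslim.congr' (hslope hc).symm⟩

theorem Fexp_mul (ε u : ℝ) (hε : ε ≠ 0) (hu : u ≠ 0) :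
    Fexp (ε * u) ε =
      ((-4 * ε ^ 3 + ε ^ 9) * u ^ 9 + 12 * ε * u ^ 7 - 9 * ε * u - 8 * (u ^ 6 - 1)) /
        (8 * ε * u ^ 9) := by
  unfold Fexp
  field_simp
  ring

/-- The remainder `m` of the header, written in terms of `u = 1 + ε t` and `t = a + b ε`. -/
noncomputable def fexpJetRemainder (b ε u t : ℝ) : ℝ :=
  (-4 * ε + ε ^ 7) * u ^ 9 + 12 * t * ∑ k ∈ Finset.range 7, u ^ k - 9 * t -
    8 * t ^ 2 * (5 + 4 * u + 3 * u ^ 2 + 2 * u ^ 3 + u ^ 4) - 48 * b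

theorem Fexp_mul_quadratic (a b ε : ℝ) (hε : ε ≠ 0) (hu : 1 + a * ε + b * ε ^ 2 ≠ 0) :
    Fexp (ε * (1 + a * ε + b * ε ^ 2)) ε =
      (3 - 48 * a + ε * fexpJetRemainder b ε (1 + a * ε + b * ε ^ 2) (a + b * ε)) /
        (8 * (1 + a * ε + b * ε ^ 2) ^ 9) := by
  set u := 1 + a * ε + b * ε ^ 2 with hu_def
  have hN : (-4 * ε ^ 3 + ε ^ 9) * u ^ 9 + 12 * ε * u ^ 7 - 9 * ε * u - 8 * (u ^ 6 - 1) =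
      ε * (3 - 48 * a + ε * fexpJetRemainder b ε u (a + b * ε)) := by
    simp only [hu_def, fexpJetRemainder, Finset.sum_range_succ, Finset.sum_range_zero]
    ring
  rw [Fexp_mul ε u hε hu, hN, mul_assoc, mul_left_comm, mul_div_mul_left _ _ hε]

theorem fexpJetRemainder_zero (a b : ℝ) :
    fexpJetRemainder b 0 (1 + a * 0 + b * 0 ^ 2) (a + b * 0) = 75 * a - 120 * a ^ 2 - 48 * b := by
  simp only [fexpJetRemainder, Finset.sum_range_succ, Finset.sum_range_zero]
  ring

/-- substituting h∞ = ε(1 + aε + bε²) into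
0 = Φ(1/ε) − Φ(h∞/ε) − (1/ε)Φ'(h∞/ε)(1−h∞) and requiring the two lowest
orders in ε to vanish (i.e. F → 0 and F/ε → 0 as ε → 0⁺) forces
a = 1/16 and b = 45/512. -/
theorem stmt_9 (a b : ℝ) :
    (Tendsto (fun ε : ℝ => Fexp (ε * (1 + a * ε + b * ε ^ 2)) ε)
        (nhdsWithin 0 (Set.Ioi 0)) (nhds 0) ∧
      Tendsto (fun ε : ℝ => Fexp (ε * (1 + a * ε + b * ε ^ 2)) ε / ε)
        (nhdsWithin 0 (Set.Ioi 0)) (nhds 0)) ↔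
    (a = 1 / 16 ∧ b = 45 / 512) := by
  have hu_ne : ∀ᶠ ε in 𝓝[>] (0 : ℝ), 1 + a * ε + b * ε ^ 2 ≠ 0 :=
    nhdsWithin_le_nhds <| (by fun_prop : Continuous fun ε : ℝ => 1 + a * ε + b * ε ^ 2)
      |>.continuousAt.eventually_ne (by simp)
  have hF : (fun ε : ℝ => Fexp (ε * (1 + a * ε + b * ε ^ 2)) ε) =ᶠ[𝓝[>] 0] fun ε =>
      (3 - 48 * a + ε * fexpJetRemainder b ε (1 + a * ε + b * ε ^ 2) (a + b * ε)) /
        (8 * (1 + a * ε + b * ε ^ 2) ^ 9) := by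
    filter_upwards [hu_ne, self_mem_nhdsWithin] with ε hu hε
    exact Fexp_mul_quadratic a b ε hε.ne' hu
  rw [tendsto_congr' hF, tendsto_congr' (hF.mono fun ε h => congrArg (· / ε) h),
    tendsto_zero_and_div_tendsto_zero_iff (l := 𝓝[>] 0) (nhdsWithin_mono _ fun _ h => h.ne')
      (by unfold fexpJetRemainder; fun_prop) (by fun_prop) (by norm_num), fexpJetRemainder_zero]
  constructor
  · rintro ⟨ha, hb⟩
    have ha : a = 1 / 16 := by linarith
    subst ha
    exact ⟨rfl, by linarith⟩
  · rintro ⟨rfl, rfl⟩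
    norm_num
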